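/- arXiv:1406.3069 — 3 statements merged into one kernel-verified Lean document; each statement's English description precedes it below -/
import Mathlib

section
/- If Y and Ỹ are conformal Killing-Yano tensors of order p with associated tensors h and h̃ respectively, then the symmetric tensor K_{ab} = Y_{(a}{}^{c₂…c_p} Ỹ_{b)c₂…c_p} is a conformal Killing tensor of order two: ∇_{(a} K_{bc)} = g_{(ab} k_{c)}, where k_c = (2/p)(Y_c{}^{d₂…d_p} h̃_{d₂…d_p} + Ỹ_c{}^{d₂…d_p} h_{d₂…d_p}). -/
/-!
Summing `∇_x K_{yz}` cyclically groups the derivatives of `Y` into pairs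
`∇_x Y_{y…} + ∇_y Y_{x…}`, in which the totally antisymmetric part of the CKY equation cancels,
leaving `2 (g_{x[y} h_{…]} + g_{y[x} h_{…]})`. Expanding the antisymmetrization, the terms
`g_{xy} h_{…}` contract with `Ỹ` to `g_{(ab} k_{c)}`; in every other term `g` carries a
contracted index, which it lowers into `Ỹ`, and these terms cancel in pairs by the antisymmetry
of `Ỹ`. The same holds with the roles of `Y` and `Ỹ` exchanged.
-/

open Finset

/-- The sign of a permutation, as a real number. -/
noncomputable def esign {p : ℕ} (σ : Equiv.Perm (Fin p)) : ℝ :=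
  ((Equiv.Perm.sign σ : ℤ) : ℝ)

/-- A rank-`p` tensor (in components) is totally antisymmetric. -/
def IsAlt {ι : Type*} {p : ℕ} (T : (Fin p → ι) → ℝ) : Prop :=
  ∀ (σ : Equiv.Perm (Fin p)) (v : Fin p → ι), T (v ∘ σ) = esign σ * T v

/-- Antisymmetrization of a rank-`p` tensor (with the `1/p!` factor). -/
noncomputable def alt {ι : Type*} {p : ℕ} (T : (Fin p → ι) → ℝ) : (Fin p → ι) → ℝ :=
  fun v => (Nat.factorial p : ℝ)⁻¹ * ∑ σ : Equiv.Perm (Fin p), esign σ * T (v ∘ σ)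

/-- The tensor `g_{a[b₁} h_{b₂…b_{q+1}]}` :
antisymmetrization over the last `q+1` indices of `g_{a b₁} h_{b₂…b_{q+1}}`. -/
noncomputable def ghAlt {ι : Type*} {q : ℕ} (g : ι → ι → ℝ) (h : (Fin q → ι) → ℝ)
    (a : ι) : (Fin (q + 1) → ι) → ℝ :=
  alt fun v => g a (v 0) * h fun i => v i.succ

/-- View a "derivative" `D : ι → ((Fin p → ι) → ℝ)` as a rank-`(p+1)` tensor. -/
def totalD {ι : Type*} {p : ℕ} (D : ι → (Fin p → ι) → ℝ) : (Fin (p + 1) → ι) → ℝ :=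
  fun w => D (w 0) fun i => w i.succ

/-- Leibniz expression for `∇_x K_{yz}` where
`K_{yz} = Y_{(y}{}^{c₂…c_p} Ỹ_{z)c₂…c_p}` (indices raised with `ginv`). -/
noncomputable def gradK {ι : Type*} [Fintype ι] {q : ℕ} (ginv : ι → ι → ℝ)
    (Y Y' : (Fin (q + 1) → ι) → ℝ) (DY DY' : ι → (Fin (q + 1) → ι) → ℝ)
    (x y z : ι) : ℝ :=
  (1 / 2) * ∑ u : Fin q → ι, ∑ w : Fin q → ι, (∏ i, ginv (u i) (w i)) *
    (DY x (Fin.cons y u) * Y' (Fin.cons z w) + Y (Fin.cons y u) * DY' x (Fin.cons z w)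
      + DY x (Fin.cons z u) * Y' (Fin.cons y w) + Y (Fin.cons z u) * DY' x (Fin.cons y w))

/-- The one-form `k_c = (2/p)(Y_c{}^{d₂…d_p} h̃_{d₂…d_p} + Ỹ_c{}^{d₂…d_p} h_{d₂…d_p})`. -/
noncomputable def kOneForm {ι : Type*} [Fintype ι] {q : ℕ} (ginv : ι → ι → ℝ)
    (Y Y' : (Fin (q + 1) → ι) → ℝ) (h h' : (Fin q → ι) → ℝ) (c : ι) : ℝ :=
  (2 / ((q : ℝ) + 1)) * ∑ u : Fin q → ι, ∑ w : Fin q → ι, (∏ i, ginv (u i) (w i)) *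
    (Y (Fin.cons c u) * h' w + Y' (Fin.cons c u) * h w)


section Antisymmetrization

variable {ι : Type*}

lemma esign_mul {p : ℕ} (σ τ : Equiv.Perm (Fin p)) : esign (σ * τ) = esign σ * esign τ := by
  simp [esign]

lemma esign_mul_self {p : ℕ} (σ : Equiv.Perm (Fin p)) : esign σ * esign σ = 1 := by
  rw [← esign_mul]
  rcases Int.units_eq_one_or (Equiv.Perm.sign σ) with h | h <;> simp [esign, h]

lemma isAlt_alt {p : ℕ} (T : (Fin p → ι) → ℝ) : IsAlt (alt T) := by
  intro σ v
  have hterm : ∀ τ : Equiv.Perm (Fin p),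
      esign τ * T ((v ∘ σ) ∘ τ) = esign σ * (esign (σ * τ) * T (v ∘ ⇑(σ * τ))) := by
    intro τ
    rw [esign_mul, ← mul_assoc, ← mul_assoc, esign_mul_self, one_mul]
    rfl
  simp only [alt, hterm, ← Finset.mul_sum]
  rw [Fintype.sum_equiv (Equiv.mulLeft σ) (fun τ => esign (σ * τ) * T (v ∘ ⇑(σ * τ)))
    (fun ρ => esign ρ * T (v ∘ ⇑ρ)) (fun τ => rfl)]
  ring

lemma IsAlt.comp_swap {p : ℕ} {T : (Fin p → ι) → ℝ} (hT : IsAlt T) {i k : Fin p} (hik : i ≠ k)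
    (v : Fin p → ι) : T (v ∘ Equiv.swap i k) = -T v := by
  simp [hT (Equiv.swap i k) v, esign, Equiv.Perm.sign_swap hik]

lemma alt_mul_tail {q : ℕ} (f : ι → ℝ) {h : (Fin q → ι) → ℝ} (hh : IsAlt h)
    (v : Fin (q + 1) → ι) :
    alt (fun v => f (v 0) * h fun i => v i.succ) v =
      ((q : ℝ) + 1)⁻¹ * ∑ k, (if k = 0 then 1 else -1) *
        (f (v k) * h fun i => v (Equiv.swap 0 k i.succ)) := by
  have hterm : ∀ (k : Fin (q + 1)) (τ : Equiv.Perm (Fin q)),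
      esign (Equiv.Perm.decomposeFin.symm (k, τ)) *
        (f ((v ∘ Equiv.Perm.decomposeFin.symm (k, τ)) 0) *
          h fun i => (v ∘ Equiv.Perm.decomposeFin.symm (k, τ)) i.succ)
      = (if k = 0 then 1 else -1) * (f (v k) * h fun i => v (Equiv.swap 0 k i.succ)) := by
    intro k τ
    have htail : (fun i => (v ∘ Equiv.Perm.decomposeFin.symm (k, τ)) i.succ)
        = (fun i => v (Equiv.swap 0 k i.succ)) ∘ τ := by
      funext i
      simp [Equiv.Perm.decomposeFin_symm_apply_succ]
    have hsign : esign (Equiv.Perm.decomposeFin.symm (k, τ))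
        = (if k = 0 then 1 else -1) * esign τ := by
      unfold esign
      rw [Equiv.Perm.decomposeFin.symm_sign]
      split <;> push_cast <;> ring
    rw [Function.comp_apply, Equiv.Perm.decomposeFin_symm_apply_zero, htail, hh τ, hsign]
    linear_combination ((if k = 0 then (1 : ℝ) else -1) * f (v k) *
      h fun i => v (Equiv.swap 0 k i.succ)) * esign_mul_self τ
  unfold alt
  rw [← Equiv.sum_comp Equiv.Perm.decomposeFin.symm, Fintype.sum_prod_type]
  simp only [hterm, sum_const, card_univ, Fintype.card_perm, Fintype.card_fin, nsmul_eq_mul,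
    ← Finset.mul_sum, Nat.factorial_succ]
  push_cast
  field_simp

lemma sum_swap_zero_cons {q : ℕ} (F : ι → ((Fin q → ι) → ℝ)) (y : ι) (u : Fin q → ι) :
    ∑ k : Fin (q + 1), (if k = 0 then 1 else -1) *
        F ((Fin.cons y u : Fin (q + 1) → ι) k) (fun i => (Fin.cons y u : Fin (q + 1) → ι) (Equiv.swap 0 k i.succ))
      = F y u - ∑ j, F (u j) (Function.update u j y) := by
  have hzero : (fun i => (Fin.cons y u : Fin (q + 1) → ι) (Equiv.swap 0 0 i.succ)) = u := by
    funext i; simp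
  have hsucc : ∀ j : Fin q,
      (fun i => (Fin.cons y u : Fin (q + 1) → ι) (Equiv.swap 0 j.succ i.succ))
        = Function.update u j y := by
    intro j; funext i
    rcases eq_or_ne i j with rfl | hij
    · simp
    · rw [Equiv.swap_apply_of_ne_of_ne (Fin.succ_ne_zero i) ((Fin.succ_injective q).ne hij)]
      simp [Function.update_of_ne hij]
  simp only [Fin.sum_univ_succ, hzero, hsucc, Fin.cons_zero, Fin.cons_succ, if_pos,
    Fin.succ_ne_zero, if_false, neg_one_mul, one_mul, Finset.sum_neg_distrib]
  ring

lemma ghAlt_cons {q : ℕ} (g : ι → ι → ℝ) {h : (Fin q → ι) → ℝ} (hh : IsAlt h)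
    (x y : ι) (u : Fin q → ι) :
    ghAlt g h x (Fin.cons y u) =
      ((q : ℝ) + 1)⁻¹ * (g x y * h u - ∑ j, g x (u j) * h (Function.update u j y)) := by
  rw [ghAlt, alt_mul_tail (g x) hh, sum_swap_zero_cons (fun z w => g x z * h w)]

lemma cky_add_swap {q : ℕ} {g : ι → ι → ℝ} {h : (Fin q → ι) → ℝ}
    {DY : ι → (Fin (q + 1) → ι) → ℝ}
    (hCKY : ∀ (a : ι) (v : Fin (q + 1) → ι),
      DY a v = alt (totalD DY) (Fin.cons a v) + 2 * ghAlt g h a v)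
    (x y : ι) (u : Fin q → ι) :
    DY x (Fin.cons y u) + DY y (Fin.cons x u)
      = 2 * (ghAlt g h x (Fin.cons y u) + ghAlt g h y (Fin.cons x u)) := by
  have hswap : (Fin.cons y (Fin.cons x u) : Fin (q + 2) → ι)
      = (Fin.cons x (Fin.cons y u) : Fin (q + 2) → ι) ∘ Equiv.swap 0 1 := by
    funext i
    refine Fin.cases ?_ (fun m => Fin.cases ?_ (fun m' => ?_) m) i
    · simp
    · simp
    · have hne : (m'.succ.succ : Fin (q + 2)) ≠ 1 := by
        rw [← Fin.succ_zero_eq_one]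
        exact (Fin.succ_injective _).ne (Fin.succ_ne_zero m')
      simp [Equiv.swap_apply_of_ne_of_ne (Fin.succ_ne_zero _) hne]
  have hcancel : alt (totalD DY) (Fin.cons x (Fin.cons y u))
      + alt (totalD DY) (Fin.cons y (Fin.cons x u)) = 0 := by
    rw [hswap, (isAlt_alt (totalD DY)).comp_swap (by simp)]
    ring
  rw [hCKY x, hCKY y]
  linear_combination hcancel

end Antisymmetrization

section Contraction

variable {ι : Type*} [Fintype ι] {q : ℕ}

/-- The inner product `S_{u₁…u_q} T^{u₁…u_q}` of rank-`q` tensors, indices raised with `ginv`. -/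
noncomputable def contractForm (ginv : ι → ι → ℝ) : LinearMap.BilinForm ℝ ((Fin q → ι) → ℝ) :=
  LinearMap.mk₂ ℝ (fun S T => ∑ u, ∑ w, (∏ i, ginv (u i) (w i)) * (S u * T w))
    (fun S₁ S₂ T => by simp only [Pi.add_apply, add_mul, mul_add, sum_add_distrib])
    (fun c S T => by
      simp only [Pi.smul_apply, smul_eq_mul, mul_sum]
      exact sum_congr rfl fun _ _ => sum_congr rfl fun _ _ => by ring)
    (fun S T₁ T₂ => by simp only [Pi.add_apply, mul_add, sum_add_distrib])
    (fun c S T => by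
      simp only [Pi.smul_apply, smul_eq_mul, mul_sum]
      exact sum_congr rfl fun _ _ => sum_congr rfl fun _ _ => by ring)

lemma contractForm_apply (ginv : ι → ι → ℝ) (S T : (Fin q → ι) → ℝ) :
    contractForm ginv S T = ∑ u, ∑ w, (∏ i, ginv (u i) (w i)) * (S u * T w) :=
  rfl

lemma contractForm_comm {ginv : ι → ι → ℝ} (hginv : ∀ a b, ginv a b = ginv b a)
    (S T : (Fin q → ι) → ℝ) : contractForm ginv S T = contractForm ginv T S := by
  rw [contractForm_apply, contractForm_apply, sum_comm]
  refine sum_congr rfl fun u _ => sum_congr rfl fun w _ => ?_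
  rw [prod_congr rfl fun i _ => hginv (w i) (u i), mul_comm (S w)]

/-- Contracting `g_{x u_j}` lowers the `j`-th index of the other factor to `x`. -/
lemma contractForm_lower_index [DecidableEq ι] {g ginv : ι → ι → ℝ}
    (hg : ∀ a b, g a b = g b a) (hginv : ∀ a b, ginv a b = ginv b a)
    (hinv : ∀ a b, ∑ c, ginv a c * g c b = if a = b then (1 : ℝ) else 0)
    (j : Fin (q + 1)) (x : ι) (P : (Fin q → ι) → ℝ) (Q : (Fin (q + 1) → ι) → ℝ) :
    contractForm ginv (fun u => g x (u j) * P (j.removeNth u)) Q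
      = contractForm ginv P (fun w => Q (j.insertNth x w)) := by
  have hdelta : ∀ d : ι, ∑ c, ginv c d * g x c = if d = x then 1 else 0 := fun d => by
    simp_rw [hginv _ d, hg x, hinv]
  have hprod : ∀ (c d : ι) (u w : Fin q → ι),
      ∏ i, ginv ((j.insertNth c u : Fin (q + 1) → ι) i) ((j.insertNth d w : Fin (q + 1) → ι) i)
        = ginv c d * ∏ i, ginv (u i) (w i) :=
    fun c d u w => by simp [Fin.prod_univ_succAbove _ j]
  set e := Fin.insertNthEquiv (fun _ => ι) j
  have he : ∀ c u, e (c, u) = j.insertNth c u := fun _ _ => rfl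
  have hinner : ∀ (c : ι) (u : Fin q → ι),
      ∑ w, (∏ i, ginv (e (c, u) i) (w i)) * (g x (e (c, u) j) * P (j.removeNth (e (c, u))) * Q w)
        = ∑ d, ∑ w, ginv c d * ((∏ i, ginv (u i) (w i)) * (g x c * P u * Q (j.insertNth d w))) :=
    fun c u => by
      rw [← e.sum_comp, Fintype.sum_prod_type]
      simp only [he, hprod, Fin.insertNth_apply_same, Fin.removeNth_insertNth, mul_assoc]
  rw [contractForm_apply, contractForm_apply, ← e.sum_comp, Fintype.sum_prod_type]
  simp only [hinner]
  rw [sum_comm]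
  refine sum_congr rfl fun u _ => ?_
  rw [sum_comm_cycle]
  refine sum_congr rfl fun w _ => ?_
  rw [sum_comm]
  calc ∑ d, ∑ c, ginv c d * ((∏ i, ginv (u i) (w i)) * (g x c * P u * Q (j.insertNth d w)))
      = ∑ d, (∑ c, ginv c d * g x c) * ((∏ i, ginv (u i) (w i)) * (P u * Q (j.insertNth d w))) :=
        sum_congr rfl fun d _ => by rw [sum_mul]; exact sum_congr rfl fun c _ => by ring
    _ = (∏ i, ginv (u i) (w i)) * (P u * Q (j.insertNth x w)) := by simp [hdelta]

/-- After lowering, the two terms differ by the transposition of `z` and `x` in `Z`. -/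
lemma contractForm_lower_index_add_swap [DecidableEq ι] {g ginv : ι → ι → ℝ}
    (hg : ∀ a b, g a b = g b a) (hginv : ∀ a b, ginv a b = ginv b a)
    (hinv : ∀ a b, ∑ c, ginv a c * g c b = if a = b then (1 : ℝ) else 0)
    (H : (Fin q → ι) → ℝ) {Z : (Fin (q + 1) → ι) → ℝ} (hZ : IsAlt Z) (j : Fin q) (x y z : ι) :
    contractForm ginv (fun u => g x (u j) * H (Function.update u j y)) (fun w => Z (Fin.cons z w))
      + contractForm ginv (fun u => g z (u j) * H (Function.update u j y))
          (fun w => Z (Fin.cons x w)) = 0 := by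
  obtain ⟨q, rfl⟩ : ∃ q', q = q' + 1 := ⟨q - 1, by have := j.pos; omega⟩
  have hflip : ∀ w : Fin q → ι,
      Z (Fin.cons z (j.insertNth x w)) = -Z (Fin.cons x (j.insertNth z w)) := by
    intro w
    have hcomp : (Fin.cons z (j.insertNth x w) : Fin (q + 2) → ι)
        = (Fin.cons x (j.insertNth z w) : Fin (q + 2) → ι) ∘ Equiv.swap 0 j.succ := by
      funext i
      refine Fin.cases (by simp) (fun m => ?_) i
      rcases eq_or_ne m j with rfl | hmj
      · simp
      · obtain ⟨t, rfl⟩ := Fin.exists_succAbove_eq hmj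
        rw [Function.comp_apply, Equiv.swap_apply_of_ne_of_ne (Fin.succ_ne_zero _)
          ((Fin.succ_injective _).ne hmj)]
        simp
    rw [hcomp, hZ.comp_swap (Fin.succ_ne_zero j).symm]
  simp_rw [← Fin.insertNth_removeNth]
  rw [contractForm_lower_index hg hginv hinv j x (fun u => H (j.insertNth y u)),
    contractForm_lower_index hg hginv hinv j z (fun u => H (j.insertNth y u)), ← map_add]
  convert map_zero (contractForm ginv (fun u => H (j.insertNth y u)))
  funext w
  simp [hflip]

end Contraction

section ConformalKilling

variable {ι : Type*} [Fintype ι] {q : ℕ}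

lemma contractForm_cky_add_swap {g ginv : ι → ι → ℝ} (hg : ∀ a b, g a b = g b a)
    {h : (Fin q → ι) → ℝ} (hh : IsAlt h) {DY : ι → (Fin (q + 1) → ι) → ℝ}
    (hCKY : ∀ (a : ι) (v : Fin (q + 1) → ι),
      DY a v = alt (totalD DY) (Fin.cons a v) + 2 * ghAlt g h a v)
    (x y : ι) (Z : (Fin q → ι) → ℝ) :
    contractForm ginv (fun u => DY x (Fin.cons y u)) Z
        + contractForm ginv (fun u => DY y (Fin.cons x u)) Z
      = ((q : ℝ) + 1)⁻¹ * (4 * g x y * contractForm ginv h Z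
          - 2 * (∑ j, contractForm ginv (fun u => g x (u j) * h (Function.update u j y)) Z
            + ∑ j, contractForm ginv (fun u => g y (u j) * h (Function.update u j x)) Z)) := by
  have hsum : (fun u => DY x (Fin.cons y u)) + (fun u => DY y (Fin.cons x u))
      = (((q : ℝ) + 1)⁻¹ * (4 * g x y)) • h - (((q : ℝ) + 1)⁻¹ * 2) •
          ((∑ j, fun u => g x (u j) * h (Function.update u j y))
            + ∑ j, fun u => g y (u j) * h (Function.update u j x)) := by
    funext u
    simp only [Pi.add_apply, Pi.sub_apply, Pi.smul_apply, Finset.sum_apply, smul_eq_mul,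
      cky_add_swap hCKY, ghAlt_cons g hh, hg y x]
    ring
  rw [← LinearMap.add_apply, ← map_add, hsum]
  simp only [map_sub, map_smul, map_add, map_sum, LinearMap.sub_apply, LinearMap.smul_apply,
    LinearMap.add_apply, LinearMap.coe_sum, Finset.sum_apply, smul_eq_mul]
  ring

lemma contractForm_cky_cyclic [DecidableEq ι] {g ginv : ι → ι → ℝ}
    (hg : ∀ a b, g a b = g b a) (hginv : ∀ a b, ginv a b = ginv b a)
    (hinv : ∀ a b, ∑ c, ginv a c * g c b = if a = b then (1 : ℝ) else 0)
    {h : (Fin q → ι) → ℝ} (hh : IsAlt h) {Z : (Fin (q + 1) → ι) → ℝ} (hZ : IsAlt Z)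
    {DY : ι → (Fin (q + 1) → ι) → ℝ}
    (hCKY : ∀ (a : ι) (v : Fin (q + 1) → ι),
      DY a v = alt (totalD DY) (Fin.cons a v) + 2 * ghAlt g h a v)
    (a b c : ι) :
    contractForm ginv (fun u => DY a (Fin.cons b u)) (fun w => Z (Fin.cons c w))
        + contractForm ginv (fun u => DY b (Fin.cons a u)) (fun w => Z (Fin.cons c w))
        + contractForm ginv (fun u => DY b (Fin.cons c u)) (fun w => Z (Fin.cons a w))
        + contractForm ginv (fun u => DY c (Fin.cons b u)) (fun w => Z (Fin.cons a w))
        + contractForm ginv (fun u => DY c (Fin.cons a u)) (fun w => Z (Fin.cons b w))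
        + contractForm ginv (fun u => DY a (Fin.cons c u)) (fun w => Z (Fin.cons b w))
      = 4 / ((q : ℝ) + 1) * (g a b * contractForm ginv h (fun w => Z (Fin.cons c w))
          + g b c * contractForm ginv h (fun w => Z (Fin.cons a w))
          + g c a * contractForm ginv h (fun w => Z (Fin.cons b w))) := by
  have htrace : ∀ x y z : ι,
      ∑ j, contractForm ginv (fun u => g x (u j) * h (Function.update u j y))
          (fun w => Z (Fin.cons z w))
        + ∑ j, contractForm ginv (fun u => g z (u j) * h (Function.update u j y))
          (fun w => Z (Fin.cons x w)) = 0 := fun x y z => by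
    rw [← sum_add_distrib]
    exact sum_eq_zero fun j _ => contractForm_lower_index_add_swap hg hginv hinv h hZ j x y z
  have hpair := contractForm_cky_add_swap (ginv := ginv) hg hh hCKY
  linear_combination hpair a b (fun w => Z (Fin.cons c w))
    + hpair b c (fun w => Z (Fin.cons a w)) + hpair c a (fun w => Z (Fin.cons b w))
    - 2 * ((q : ℝ) + 1)⁻¹ * (htrace a b c + htrace b a c + htrace b c a)

lemma gradK_eq {ginv : ι → ι → ℝ} (hginv : ∀ a b, ginv a b = ginv b a)
    (Y Y' : (Fin (q + 1) → ι) → ℝ) (DY DY' : ι → (Fin (q + 1) → ι) → ℝ) (x y z : ι) :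
    gradK ginv Y Y' DY DY' x y z = 1 / 2 *
      (contractForm ginv (fun u => DY x (Fin.cons y u)) (fun w => Y' (Fin.cons z w))
        + contractForm ginv (fun u => DY' x (Fin.cons z u)) (fun w => Y (Fin.cons y w))
        + contractForm ginv (fun u => DY x (Fin.cons z u)) (fun w => Y' (Fin.cons y w))
        + contractForm ginv (fun u => DY' x (Fin.cons y u)) (fun w => Y (Fin.cons z w))) := by
  rw [contractForm_comm hginv (fun u => DY' x (Fin.cons z u)),
    contractForm_comm hginv (fun u => DY' x (Fin.cons y u))]
  simp only [gradK, contractForm_apply, ← sum_add_distrib, ← mul_add]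

lemma kOneForm_eq {ginv : ι → ι → ℝ} (hginv : ∀ a b, ginv a b = ginv b a)
    (Y Y' : (Fin (q + 1) → ι) → ℝ) (h h' : (Fin q → ι) → ℝ) (c : ι) :
    kOneForm ginv Y Y' h h' c = 2 / ((q : ℝ) + 1) *
      (contractForm ginv h' (fun w => Y (Fin.cons c w))
        + contractForm ginv h (fun w => Y' (Fin.cons c w))) := by
  rw [contractForm_comm hginv h', contractForm_comm hginv h]
  simp only [kOneForm, contractForm_apply, ← sum_add_distrib, ← mul_add]

end ConformalKilling

theorem statement2_general {ι : Type*} [Fintype ι] [DecidableEq ι] {q : ℕ}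
    (g ginv : ι → ι → ℝ)
    (hgsymm : ∀ a b, g a b = g b a) (hginvsymm : ∀ a b, ginv a b = ginv b a)
    (hinv : ∀ a b, ∑ c, ginv a c * g c b = if a = b then (1 : ℝ) else 0)
    (Y Y' : (Fin (q + 1) → ι) → ℝ) (hYalt : IsAlt Y) (hY'alt : IsAlt Y')
    (h h' : (Fin q → ι) → ℝ) (hhalt : IsAlt h) (hh'alt : IsAlt h')
    (DY DY' : ι → (Fin (q + 1) → ι) → ℝ)
    (hCKY : ∀ (a : ι) (v : Fin (q + 1) → ι),
      DY a v = alt (totalD DY) (Fin.cons a v) + 2 * ghAlt g h a v)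
    (hCKY' : ∀ (a : ι) (v : Fin (q + 1) → ι),
      DY' a v = alt (totalD DY') (Fin.cons a v) + 2 * ghAlt g h' a v) :
    ∀ a b c : ι,
      gradK ginv Y Y' DY DY' a b c + gradK ginv Y Y' DY DY' b c a
          + gradK ginv Y Y' DY DY' c a b
        = g a b * kOneForm ginv Y Y' h h' c + g b c * kOneForm ginv Y Y' h h' a
          + g c a * kOneForm ginv Y Y' h h' b := by
  intro a b c
  have hDY := contractForm_cky_cyclic hgsymm hginvsymm hinv hhalt hY'alt hCKY a b c
  have hDY' := contractForm_cky_cyclic hgsymm hginvsymm hinv hh'alt hYalt hCKY' a b c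
  simp only [gradK_eq hginvsymm, kOneForm_eq hginvsymm]
  linear_combination (1 / 2 : ℝ) * (hDY + hDY')

/-- If `Y`, `Ỹ` are CKY tensors of order `p = q+1` with associated
tensors `h`, `h̃`, then `K_{ab} = Y_{(a}{}^{c₂…c_p} Ỹ_{b)c₂…c_p}` is a conformal
Killing tensor of order two: `∇_{(a} K_{bc)} = g_{(ab} k_{c)}`, i.e.
`∇_a K_{bc} + ∇_b K_{ca} + ∇_c K_{ab} = g_{ab} k_c + g_{bc} k_a + g_{ca} k_b`. -/
theorem statement2 {ι : Type*} [Fintype ι] [DecidableEq ι] {q : ℕ}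
    (g ginv : ι → ι → ℝ)
    (hgsymm : ∀ a b, g a b = g b a) (hginvsymm : ∀ a b, ginv a b = ginv b a)
    (hinv : ∀ a b, ∑ c, ginv a c * g c b = if a = b then (1 : ℝ) else 0)
    (Y Y' : (Fin (q + 1) → ι) → ℝ) (hYalt : IsAlt Y) (hY'alt : IsAlt Y')
    (h h' : (Fin q → ι) → ℝ) (hhalt : IsAlt h) (hh'alt : IsAlt h')
    (DY DY' : ι → (Fin (q + 1) → ι) → ℝ)
    (hDYalt : ∀ a, IsAlt (DY a)) (hDY'alt : ∀ a, IsAlt (DY' a))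
    (hCKY : ∀ (a : ι) (v : Fin (q + 1) → ι),
      DY a v = alt (totalD DY) (Fin.cons a v) + 2 * ghAlt g h a v)
    (hCKY' : ∀ (a : ι) (v : Fin (q + 1) → ι),
      DY' a v = alt (totalD DY') (Fin.cons a v) + 2 * ghAlt g h' a v) :
    ∀ a b c : ι,
      gradK ginv Y Y' DY DY' a b c + gradK ginv Y Y' DY DY' b c a
          + gradK ginv Y Y' DY DY' c a b
        = g a b * kOneForm ginv Y Y' h h' c + g b c * kOneForm ginv Y Y' h h' a
          + g c a * kOneForm ginv Y Y' h h' b :=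
  statement2_general g ginv hgsymm hginvsymm hinv Y Y' hYalt hY'alt h h' hhalt hh'alt DY DY' hCKY
    hCKY'
end

section
/- If Y is a conformal Killing-Yano tensor of order 2 on an n-dimensional pseudo-Riemannian manifold (n > 2), with associated one-form h (so ∇_a Y_{bc} = ∇_{[a} Y_{bc]} + 2 g_{a[b} h_{c]}), then ∇_c h_d + ∇_d h_c = (2/(n−2)) (R^f{}_c Y_{df} + R^f{}_d Y_{cf}) / 1, where R^f{}_c is the Ricci tensor; equivalently S_{cd} = (2/(n−2)) R^f{}_{(c} Y_{d)f} where S_{cd} := ∇_c h_d + ∇_d h_c. -/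
/-!
Put `A_{abcd} = ∇_a∇_bY_{cd} - g_{bc}∇_ah_d + g_{bd}∇_ah_c`; the differentiated CKY equation
says exactly that `A` is cyclic in `b, c, d`. Contract the Ricci identity for
`∇_a∇_bY_{xd} - ∇_a∇_bY_{dx}` with `g^{ax}` and symmetrise in `b, d`: the `A`-terms cancel by
cyclicity, and the term `R_{abde}Y^{ae}` is antisymmetric in `b, d` by the pair symmetry of `R`,
leaving `(4 - 2n) S_{bd} - 4 g_{bd} ∇^ah_a = 2 (R_b{}^fY_{fd} + R_d{}^fY_{fb})`.
Tracing with `g^{bd}` kills the right-hand side (a symmetric tensor against an antisymmetric one),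
so `∇^ah_a = 0` as `n ≠ 1`, and the claim follows on dividing by `4 - 2n`.
-/

open Finset

namespace ConformalKillingYano

variable {ι R : Type*} [Fintype ι] [CommRing R]

def contract (q F : ι → ι → R) : R := ∑ a, ∑ x, q a x * F a x

section Contraction

variable (q : ι → ι → R)

lemma contract_congr {F G : ι → ι → R} (h : ∀ a x, F a x = G a x) :
    contract q F = contract q G := by
  simp only [contract, h]

@[simp] lemma contract_add (F G : ι → ι → R) :
    contract q (fun a x => F a x + G a x) = contract q F + contract q G := by
  simp only [contract, mul_add, sum_add_distrib]

@[simp] lemma contract_sub (F G : ι → ι → R) :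
    contract q (fun a x => F a x - G a x) = contract q F - contract q G := by
  simp only [contract, mul_sub, sum_sub_distrib]

@[simp] lemma contract_neg (F : ι → ι → R) :
    contract q (fun a x => -F a x) = -contract q F := by
  simp only [contract, mul_neg, sum_neg_distrib]

@[simp] lemma contract_const_mul (c : R) (F : ι → ι → R) :
    contract q (fun a x => c * F a x) = c * contract q F := by
  simp only [contract, mul_sum, mul_left_comm]

@[simp] lemma contract_mul_const (F : ι → ι → R) (c : R) :
    contract q (fun a x => F a x * c) = contract q F * c := by
  simp only [contract, sum_mul, mul_assoc]

lemma contract_comm (hq : ∀ a x, q a x = q x a) (F : ι → ι → R) :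
    contract q (fun a x => F x a) = contract q F := by
  rw [contract, sum_comm]
  simp only [hq]
  rfl

lemma contract_contract_comm (p : ι → ι → R) (T : ι → ι → ι → ι → R) :
    contract q (fun a x => contract p (fun e f => T a x e f))
      = contract p (fun e f => contract q (fun a x => T a x e f)) := by
  simp only [contract, ← Fintype.sum_prod_type']
  simp only [mul_sum]
  rw [sum_comm]
  simp only [mul_left_comm]

variable [DecidableEq ι] {g ginv : ι → ι → R}
  (hinv : ∀ a b, ∑ c, ginv a c * g c b = if a = b then (1 : R) else 0)
include hinv

lemma contract_metric_mul (X : ι → R) (b : ι) :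
    contract ginv (fun a x => g x b * X a) = X b := by
  simp only [contract, ← mul_assoc, ← sum_mul, hinv, ite_mul, one_mul, zero_mul, sum_ite_eq',
    mem_univ, if_true]

lemma contract_mul_metric (hginv : ∀ a b, ginv a b = ginv b a) (X : ι → R) (b : ι) :
    contract ginv (fun a x => g a b * X x) = X b := by
  rw [← contract_metric_mul hinv X b, ← contract_comm ginv hginv]

lemma contract_metric (hginv : ∀ a b, ginv a b = ginv b a) :
    contract ginv g = Fintype.card ι := by
  rw [← contract_comm ginv hginv]
  simp [contract, hinv]

end Contraction

section Curvature

variable {Riem : ι → ι → ι → ι → R} (hpair : ∀ a b c d, Riem a b c d = Riem c d a b)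
include hpair

lemma sum_riem_mul_antisymm_swap (hasymm : ∀ a b c d, Riem a b c d = -Riem b a c d)
    {W : ι → ι → R} (hW : ∀ a e, W e a = -W a e) (b d : ι) :
    ∑ a, ∑ e, Riem a d b e * W a e = -∑ a, ∑ e, Riem a b d e * W a e := by
  calc ∑ a, ∑ e, Riem a d b e * W a e = ∑ a, ∑ e, -(Riem b e d a * W a e) := by
        simp only [hasymm _ d, hpair d, neg_mul]
    _ = ∑ e, ∑ a, -(Riem b e d a * W a e) := sum_comm
    _ = -∑ a, ∑ e, Riem a b d e * W a e := by
        rw [← sum_neg_distrib]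
        refine sum_congr rfl fun a _ => ?_
        rw [← sum_neg_distrib]
        refine sum_congr rfl fun e _ => ?_
        rw [hasymm b a d e, hW a e]
        ring

lemma ricci_symm {ginv : ι → ι → R} (hginv : ∀ a b, ginv a b = ginv b a) {Ric : ι → ι → R}
    (hRic : ∀ a b, Ric a b = ∑ c, ∑ d, ginv c d * Riem c a d b) (a b : ι) :
    Ric a b = Ric b a := by
  rw [hRic, hRic, ← contract, ← contract, ← contract_comm ginv hginv]
  simp only [hpair _ a]

end Curvature

/-- `R_b{}^f Y_{fd}`. -/
def ricciY (ginv Ric Y : ι → ι → R) (b d : ι) : R :=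
  contract ginv (fun e f => Ric b e * Y f d)

/-- `R_{abde} Y^{ae}`. -/
def riemY (ginv : ι → ι → R) (Riem : ι → ι → ι → ι → R) (Y : ι → ι → R) (b d : ι) : R :=
  contract ginv (fun a x => contract ginv (fun e f => Riem a b d e * Y x f))

/-- `g^{ax} [∇_a, ∇_b] (Y_{xd} - Y_{dx})`, with `DDY a b c d` standing for `∇_a∇_bY_{cd}`. -/
def contractedCommutator (ginv : ι → ι → R) (DDY : ι → ι → ι → ι → R) (b d : ι) : R :=
  contract ginv (fun a x => (DDY a b x d - DDY b a x d) - (DDY a b d x - DDY b a d x))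

/-- `∇_a∇_bY_{cd} - g_{bc}∇_ah_d + g_{bd}∇_ah_c`, i.e. `∇_a∇_{[b}Y_{cd]}` for a CKY tensor. -/
def skewPart (g Dh : ι → ι → R) (DDY : ι → ι → ι → ι → R) (a b c d : ι) : R :=
  DDY a b c d - g b c * Dh a d + g b d * Dh a c

omit [Fintype ι] in
lemma skewPart_cyclic {𝕜 : Type*} [Field 𝕜] {g Dh : ι → ι → 𝕜} {DDY : ι → ι → ι → ι → 𝕜}
    (hDCKY : ∀ a b c d, DDY a b c d
      = (1 / 3) * (DDY a b c d + DDY a c d b + DDY a d b c)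
        + g b c * Dh a d - g b d * Dh a c) (a b c d : ι) :
    skewPart g Dh DDY a b c d = skewPart g Dh DDY a c d b := by
  unfold skewPart
  linear_combination hDCKY a b c d - hDCKY a c d b

section SkewPart

variable [DecidableEq ι] {g ginv Dh : ι → ι → R} {DDY : ι → ι → ι → ι → R}
  (hinv : ∀ a b, ∑ c, ginv a c * g c b = if a = b then (1 : R) else 0)
  (hg : ∀ a b, g a b = g b a) (hginv : ∀ a b, ginv a b = ginv b a)
  (hcyc : ∀ a b c d, skewPart g Dh DDY a b c d = skewPart g Dh DDY a c d b)
include hinv hg hginv hcyc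

lemma contractedCommutator_eq_of_skewPart_cyclic (b d : ι) :
    contractedCommutator ginv DDY b d
      = contract ginv (fun a x => skewPart g Dh DDY a x d b)
        - contract ginv (fun a x => skewPart g Dh DDY a x b d)
        + (4 - 2 * Fintype.card ι) * Dh b d - 2 * g b d * contract ginv Dh := by
  have hpt : ∀ a x, (DDY a b x d - DDY b a x d) - (DDY a b d x - DDY b a d x)
      = (skewPart g Dh DDY a x d b - skewPart g Dh DDY a x b d)
        - (skewPart g Dh DDY b a x d - skewPart g Dh DDY b x a d)
        + 2 * (g x b * Dh a d) - 2 * g b d * Dh a x - 2 * g a x * Dh b d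
        + 2 * (g a d * Dh b x) := by
    intro a x
    rw [← hcyc a b x d, hcyc a x b d, hcyc b x a d]
    simp only [skewPart]
    rw [hg x b]
    ring
  rw [contractedCommutator, contract_congr ginv hpt]
  simp only [contract_add, contract_sub, contract_const_mul, contract_mul_const,
    contract_metric_mul hinv, contract_mul_metric hinv hginv, contract_metric hinv hginv,
    contract_comm ginv hginv (fun a x => skewPart g Dh DDY b a x d)]
  ring

lemma contractedCommutator_add_swap_of_skewPart_cyclic (b d : ι) :
    contractedCommutator ginv DDY b d + contractedCommutator ginv DDY d b
      = (4 - 2 * Fintype.card ι) * (Dh b d + Dh d b) - 4 * g b d * contract ginv Dh := by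
  rw [contractedCommutator_eq_of_skewPart_cyclic hinv hg hginv hcyc,
    contractedCommutator_eq_of_skewPart_cyclic hinv hg hginv hcyc, hg d b]
  ring

end SkewPart

section RicciIdentity

variable {ginv Y Ric : ι → ι → R} {Riem : ι → ι → ι → ι → R} (hY : ∀ a b, Y a b = -Y b a)
include hY

lemma riemY_swap (hasymm : ∀ a b c d, Riem a b c d = -Riem b a c d)
    (hpair : ∀ a b c d, Riem a b c d = Riem c d a b) (b d : ι) :
    riemY ginv Riem Y d b = -riemY ginv Riem Y b d := by
  set Yup : ι → ι → R := fun a e => ∑ x, ∑ f, ginv a x * ginv e f * Y x f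
  have hYup : ∀ a e, Yup e a = -Yup a e := by
    intro a e
    simp only [Yup, ← sum_neg_distrib]
    rw [sum_comm]
    refine sum_congr rfl fun x _ => sum_congr rfl fun f _ => ?_
    rw [hY]
    ring
  have hraise : ∀ b d, riemY ginv Riem Y b d = ∑ a, ∑ e, Riem a b d e * Yup a e := by
    intro b d
    simp only [riemY, contract, Yup, mul_sum]
    refine sum_congr rfl fun a _ => ?_
    rw [sum_comm]
    refine sum_congr rfl fun e _ => sum_congr rfl fun x _ => sum_congr rfl fun f _ => ?_
    ring
  rw [hraise, hraise, sum_riem_mul_antisymm_swap hpair hasymm hYup]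

lemma contractedCommutator_eq_of_ricciIdentity {DDY : ι → ι → ι → ι → R}
    (hRicciId : ∀ a b c d, DDY a b c d - DDY b a c d
      = ∑ e, ∑ f, ginv e f * (Riem a b c e * Y f d + Riem a b d e * Y c f))
    (hRic : ∀ a b, Ric a b = ∑ c, ∑ d, ginv c d * Riem c a d b) (b d : ι) :
    contractedCommutator ginv DDY b d = 2 * (ricciY ginv Ric Y b d + riemY ginv Riem Y b d) := by
  have hricci : contract ginv (fun a x => contract ginv (fun e f => Riem a b x e * Y f d))
      = ricciY ginv Ric Y b d := by
    rw [contract_contract_comm]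
    simp only [contract_mul_const, ricciY, hRic]
    rfl
  calc contractedCommutator ginv DDY b d
      = contract ginv (fun a x => 2 * contract ginv (fun e f => Riem a b x e * Y f d)
          + 2 * contract ginv (fun e f => Riem a b d e * Y x f)) := by
        refine contract_congr ginv fun a x => ?_
        rw [hRicciId, hRicciId]
        simp only [contract, mul_sum, ← sum_add_distrib, ← sum_sub_distrib]
        refine sum_congr rfl fun e _ => sum_congr rfl fun f _ => ?_
        rw [hY f x, hY d f]
        ring
    _ = 2 * (ricciY ginv Ric Y b d + riemY ginv Riem Y b d) := by
        simp only [contract_add, contract_const_mul, hricci, riemY]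
        ring

variable (hRic : ∀ a b, Ric a b = Ric b a)
include hRic

lemma sum_ricci_mul_antisymm_eq_neg_ricciY (c d : ι) :
    ∑ e, ∑ f, ginv e f * (Ric e c * Y d f + Ric e d * Y c f)
      = -(ricciY ginv Ric Y c d + ricciY ginv Ric Y d c) := by
  simp only [ricciY, contract, ← sum_add_distrib, ← sum_neg_distrib]
  refine sum_congr rfl fun e _ => sum_congr rfl fun f _ => ?_
  rw [hRic e c, hRic e d, hY d f, hY c f]
  ring

lemma contract_ricciY_add_swap (hginv : ∀ a b, ginv a b = ginv b a) :
    contract ginv (fun b d => ricciY ginv Ric Y b d + ricciY ginv Ric Y d b) = 0 := by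
  have hneg : contract ginv (ricciY ginv Ric Y) = -contract ginv (ricciY ginv Ric Y) := by
    calc contract ginv (ricciY ginv Ric Y)
        = contract ginv (fun b d => contract ginv (fun e f => Ric e b * Y d f)) :=
          contract_contract_comm ginv ginv _
      _ = -contract ginv (ricciY ginv Ric Y) := by
          unfold ricciY
          simp only [← contract_neg]
          refine contract_congr ginv fun b d => contract_congr ginv fun e f => ?_
          rw [hRic e b, hY d f]
          ring
  rw [contract_add, contract_comm ginv hginv (fun b d => ricciY ginv Ric Y b d)]
  linear_combination hneg

end RicciIdentity

section CKY

variable {𝕜 : Type*} [Field 𝕜] [DecidableEq ι] {g ginv Y Dh Ric : ι → ι → 𝕜}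
  {DDY Riem : ι → ι → ι → ι → 𝕜}
  (hg : ∀ a b, g a b = g b a) (hginv : ∀ a b, ginv a b = ginv b a)
  (hinv : ∀ a b, ∑ c, ginv a c * g c b = if a = b then (1 : 𝕜) else 0)
  (hY : ∀ a b, Y a b = -Y b a)
  (hDCKY : ∀ a b c d, DDY a b c d
    = (1 / 3) * (DDY a b c d + DDY a c d b + DDY a d b c) + g b c * Dh a d - g b d * Dh a c)
  (hRicciId : ∀ a b c d, DDY a b c d - DDY b a c d
    = ∑ e, ∑ f, ginv e f * (Riem a b c e * Y f d + Riem a b d e * Y c f))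
  (hasymm : ∀ a b c d, Riem a b c d = -Riem b a c d)
  (hpair : ∀ a b c d, Riem a b c d = Riem c d a b)
  (hRic : ∀ a b, Ric a b = ∑ c, ∑ d, ginv c d * Riem c a d b)
include hg hginv hinv hY hDCKY hRicciId hasymm hpair hRic

lemma two_mul_ricciY_add_swap (b d : ι) :
    2 * (ricciY ginv Ric Y b d + ricciY ginv Ric Y d b)
      = (4 - 2 * Fintype.card ι) * (Dh b d + Dh d b) - 4 * g b d * contract ginv Dh := by
  rw [← contractedCommutator_add_swap_of_skewPart_cyclic hinv hg hginv (skewPart_cyclic hDCKY),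
    contractedCommutator_eq_of_ricciIdentity hY hRicciId hRic,
    contractedCommutator_eq_of_ricciIdentity hY hRicciId hRic, riemY_swap hY hasymm hpair]
  ring

lemma contract_dh_eq_zero [CharZero 𝕜] (hn : Fintype.card ι ≠ 1) : contract ginv Dh = 0 := by
  have htrace := congrArg (contract ginv) (funext₂ (two_mul_ricciY_add_swap hg hginv hinv hY
    hDCKY hRicciId hasymm hpair hRic))
  simp only [contract_sub, contract_const_mul, contract_add, contract_mul_const,
    contract_comm ginv hginv Dh, contract_metric hinv hginv,
    contract_ricciY_add_swap hY (ricci_symm hpair hginv hRic) hginv] at htrace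
  have hcoeff : (8 * (1 - Fintype.card ι) : 𝕜) ≠ 0 :=
    mul_ne_zero (by norm_num) (sub_ne_zero.2 (by exact_mod_cast hn.symm))
  exact (mul_eq_zero.1 (by linear_combination -htrace)).resolve_left hcoeff

end CKY

end ConformalKillingYano

open ConformalKillingYano in
theorem statement7_general {ι : Type*} [Fintype ι] [DecidableEq ι]
    (hdim : 2 < Fintype.card ι)
    (g ginv : ι → ι → ℝ)
    (hgsymm : ∀ a b, g a b = g b a) (hginvsymm : ∀ a b, ginv a b = ginv b a)
    (hinv : ∀ a b, ∑ c, ginv a c * g c b = if a = b then (1 : ℝ) else 0)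
    (Y : ι → ι → ℝ) (hYalt : ∀ a b, Y a b = -Y b a)
    (Dh : ι → ι → ℝ) (DDY : ι → ι → ι → ι → ℝ)
    (Riem : ι → ι → ι → ι → ℝ) (Ric : ι → ι → ℝ)
    (hDCKY : ∀ a b c d, DDY a b c d
      = (1 / 3) * (DDY a b c d + DDY a c d b + DDY a d b c)
        + g b c * Dh a d - g b d * Dh a c)
    (hRicciId : ∀ a b c d, DDY a b c d - DDY b a c d
      = ∑ e, ∑ f, ginv e f * (Riem a b c e * Y f d + Riem a b d e * Y c f))
    (hRiemAsym₁ : ∀ a b c d, Riem a b c d = -Riem b a c d)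
    (hRiemPair : ∀ a b c d, Riem a b c d = Riem c d a b)
    (hRic : ∀ a b, Ric a b = ∑ c, ∑ d, ginv c d * Riem c a d b) :
    ∀ c d, Dh c d + Dh d c
      = (2 / ((Fintype.card ι : ℝ) - 2)) *
          ((1 / 2) * (∑ e, ∑ f, ginv e f * (Ric e c * Y d f + Ric e d * Y c f))) := by
  intro c d
  have hsymm := two_mul_ricciY_add_swap hgsymm hginvsymm hinv hYalt hDCKY hRicciId hRiemAsym₁
    hRiemPair hRic c d
  rw [contract_dh_eq_zero hgsymm hginvsymm hinv hYalt hDCKY hRicciId hRiemAsym₁ hRiemPair hRic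
    (by omega), mul_zero, sub_zero] at hsymm
  have hn : (Fintype.card ι : ℝ) - 2 ≠ 0 := by
    rw [sub_ne_zero]
    exact_mod_cast hdim.ne'
  rw [sum_ricci_mul_antisymm_eq_neg_ricciY hYalt (ricci_symm hRiemPair hginvsymm hRic),
    div_mul_eq_mul_div, eq_div_iff hn]
  linear_combination (1 / 2) * hsymm

/-- Let `Y` be a conformal Killing–Yano tensor of order 2 on an
`n`-dimensional pseudo-Riemannian manifold with `n > 2`, with associated one-form
`h` (so `∇_a Y_{bc} = ∇_{[a} Y_{bc]} + 2 g_{a[b} h_{c]}`).  With `D = ∇Y`,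
`Dh = ∇h`, `DDY = ∇∇Y` subject to the differentiated CKY equation and the Ricci
identity, and `Ric` the Ricci tensor of the Riemann tensor `Riem`, one has
`S_{cd} := ∇_c h_d + ∇_d h_c = (2/(n−2)) R^f{}_{(c} Y_{d)f}`. -/
theorem statement7 {ι : Type*} [Fintype ι] [DecidableEq ι]
    (hdim : 2 < Fintype.card ι)
    (g ginv : ι → ι → ℝ)
    (hgsymm : ∀ a b, g a b = g b a) (hginvsymm : ∀ a b, ginv a b = ginv b a)
    (hinv : ∀ a b, ∑ c, ginv a c * g c b = if a = b then (1 : ℝ) else 0)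
    (Y : ι → ι → ℝ) (hYalt : ∀ a b, Y a b = -Y b a)
    (h : ι → ℝ) (D : ι → ι → ι → ℝ) (hDalt : ∀ a b c, D a b c = -D a c b)
    (Dh : ι → ι → ℝ) (DDY : ι → ι → ι → ι → ℝ)
    (Riem : ι → ι → ι → ι → ℝ) (Ric : ι → ι → ℝ)
    (hCKY : ∀ a b c, D a b c
      = (1 / 3) * (D a b c + D b c a + D c a b) + g a b * h c - g a c * h b)
    (hDCKY : ∀ a b c d, DDY a b c d
      = (1 / 3) * (DDY a b c d + DDY a c d b + DDY a d b c)
        + g b c * Dh a d - g b d * Dh a c)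
    (hRicciId : ∀ a b c d, DDY a b c d - DDY b a c d
      = ∑ e, ∑ f, ginv e f * (Riem a b c e * Y f d + Riem a b d e * Y c f))
    (hRiemAsym₁ : ∀ a b c d, Riem a b c d = -Riem b a c d)
    (hRiemAsym₂ : ∀ a b c d, Riem a b c d = -Riem a b d c)
    (hRiemPair : ∀ a b c d, Riem a b c d = Riem c d a b)
    (hBianchi : ∀ a b c d, Riem a b c d + Riem b c a d + Riem c a b d = 0)
    (hRic : ∀ a b, Ric a b = ∑ c, ∑ d, ginv c d * Riem c a d b) :
    ∀ c d, Dh c d + Dh d c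
      = (2 / ((Fintype.card ι : ℝ) - 2)) *
          ((1 / 2) * (∑ e, ∑ f, ginv e f * (Ric e c * Y d f + Ric e d * Y c f))) :=
  statement7_general hdim g ginv hgsymm hginvsymm hinv Y hYalt Dh DDY Riem Ric hDCKY hRicciId
    hRiemAsym₁ hRiemPair hRic
end

section
/- Define G_{abcd} := C_{ab[c}{}^f Y_{d]f} + C_{cd[a}{}^f Y_{b]f}, where C is the Weyl tensor and Y an antisymmetric rank-2 tensor. Then G has all the algebraic symmetries of a Weyl tensor: G_{abcd} = G_{[ab][cd]}, G_{abcd} = G_{cdab}, G_{a[bcd]} = 0, and G^a{}_{bad} = 0. -/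
/-!
Lowering the index of `Y`, `2 G` is the derivation action of the skew endomorphism `Y` on `C`:
one term per slot of `C`. Each algebraic symmetry of `C` is an `O(g)`-equivariant linear
condition, so it is inherited by `G`. Concretely, antisymmetry and pair exchange are immediate,
the Bianchi identity splits into four cyclic sums of `C` over its first three slots, and in the
trace the two terms containing a trace of `C` vanish while the other two cancel, because
`C_{abdf} + C_{adbf}` is symmetric in `a, f` and is contracted with the antisymmetric `Y^{af}`.
-/

section Cyclic

variable {α R : Type*} [CommRing R] {C : α → α → α → α → R}

theorem cyclic_of_bianchi (hC₁ : ∀ a b c d, C a b c d = -C b a c d)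
    (hCPair : ∀ a b c d, C a b c d = C c d a b)
    (hCBianchi : ∀ a b c d, C a b c d + C a c d b + C a d b c = 0) (a b c d : α) :
    C a b c d + C b c a d + C c a b d = 0 := by
  linear_combination hCPair a b c d + hC₁ c d a b + hCPair b c a d + hC₁ a d b c
    + hCPair c a b d + hC₁ b d c a - hCBianchi d a b c

end Cyclic

section Contraction

variable {ι R : Type*} [Fintype ι] [CommRing R]
  {ginv : ι → ι → R} {C : ι → ι → ι → ι → R} {Y : ι → ι → R}

/-- `contractLast ginv C Y a b c d = C_{abc}{}^f Y_{df}`. -/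
def contractLast (ginv : ι → ι → R) (C : ι → ι → ι → ι → R) (Y : ι → ι → R) (a b c d : ι) : R :=
  ∑ e, ∑ f, ginv e f * C a b c e * Y d f

/-- `skewAction ginv C Y a b c d = 2 G_{abcd}`. -/
def skewAction (ginv : ι → ι → R) (C : ι → ι → ι → ι → R) (Y : ι → ι → R) (a b c d : ι) : R :=
  contractLast ginv C Y a b c d - contractLast ginv C Y a b d c
    + contractLast ginv C Y c d a b - contractLast ginv C Y c d b a

def raiseBoth (ginv : ι → ι → R) (Y : ι → ι → R) (a b : ι) : R :=
  ∑ e, ∑ f, ginv a e * ginv b f * Y e f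

theorem sum_sum_mul_swap_of_symm (hginv : ∀ a b, ginv a b = ginv b a) (F : ι → ι → R) :
    ∑ a, ∑ e, ginv a e * F e a = ∑ a, ∑ e, ginv a e * F a e := by
  rw [Finset.sum_comm]
  simp only [hginv]

theorem raiseBoth_antisymm (hY : ∀ a b, Y a b = -Y b a) (a b : ι) :
    raiseBoth ginv Y b a = -raiseBoth ginv Y a b := by
  unfold raiseBoth
  rw [Finset.sum_comm, ← Finset.sum_neg_distrib]
  refine Finset.sum_congr rfl fun e _ => ?_
  rw [← Finset.sum_neg_distrib]
  refine Finset.sum_congr rfl fun f _ => ?_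
  rw [hY f e]
  ring

theorem contractLast_antisymm (hC₁ : ∀ a b c d, C a b c d = -C b a c d) (a b c d : ι) :
    contractLast ginv C Y b a c d = -contractLast ginv C Y a b c d := by
  simp only [contractLast, hC₁ b a c, mul_neg, neg_mul, Finset.sum_neg_distrib]

theorem contractLast_cyclic (hCyc : ∀ a b c d, C a b c d + C b c a d + C c a b d = 0)
    (a b c d : ι) :
    contractLast ginv C Y a b c d + contractLast ginv C Y b c a d
      + contractLast ginv C Y c a b d = 0 := by
  simp only [contractLast, ← Finset.sum_add_distrib]
  refine Finset.sum_eq_zero fun e _ => Finset.sum_eq_zero fun f _ => ?_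
  linear_combination ginv e f * Y d f * hCyc a b c e

theorem trace_contractLast (hCTr : ∀ c d, ∑ a, ∑ b, ginv a b * C a c b d = 0) (b d : ι) :
    ∑ a, ∑ e, ginv a e * contractLast ginv C Y a b e d = 0 := by
  simp only [contractLast, Finset.mul_sum]
  rw [Finset.sum_comm_cycle]
  refine Finset.sum_eq_zero fun p _ => ?_
  rw [Finset.sum_comm_cycle]
  refine Finset.sum_eq_zero fun q _ => ?_
  calc ∑ a, ∑ e, ginv a e * (ginv p q * C a b e p * Y d q)
      = ginv p q * Y d q * ∑ a, ∑ e, ginv a e * C a b e p := by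
        simp only [Finset.mul_sum]
        exact Finset.sum_congr rfl fun _ _ => Finset.sum_congr rfl fun _ _ => by ring
    _ = 0 := by rw [hCTr, mul_zero]

theorem trace_contractLast_eq_sum_raiseBoth (b d : ι) :
    ∑ a, ∑ e, ginv a e * contractLast ginv C Y a b d e
      = ∑ a, ∑ f, C a b d f * raiseBoth ginv Y a f := by
  simp only [contractLast, raiseBoth, Finset.mul_sum]
  refine Finset.sum_congr rfl fun a _ => ?_
  rw [Finset.sum_comm]
  exact Finset.sum_congr rfl fun _ _ => Finset.sum_congr rfl fun _ _ =>
    Finset.sum_congr rfl fun _ _ => by ring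

theorem sum_mul_raiseBoth_swap (hC₁ : ∀ a b c d, C a b c d = -C b a c d)
    (hC₂ : ∀ a b c d, C a b c d = -C a b d c) (hCPair : ∀ a b c d, C a b c d = C c d a b)
    (hY : ∀ a b, Y a b = -Y b a) (b d : ι) :
    ∑ a, ∑ f, C a d b f * raiseBoth ginv Y a f
      = -∑ a, ∑ f, C a b d f * raiseBoth ginv Y a f := by
  have hC : ∀ a f, C a d b f = C f b d a := fun a f => by
    rw [hCPair, hC₁, hC₂, neg_neg]
  rw [Finset.sum_comm, ← Finset.sum_neg_distrib]
  refine Finset.sum_congr rfl fun f _ => ?_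
  rw [← Finset.sum_neg_distrib]
  refine Finset.sum_congr rfl fun a _ => ?_
  rw [hC, raiseBoth_antisymm hY, mul_neg]

theorem skewAction_antisymm_left (hC₁ : ∀ a b c d, C a b c d = -C b a c d) (a b c d : ι) :
    skewAction ginv C Y b a c d = -skewAction ginv C Y a b c d := by
  simp only [skewAction, contractLast_antisymm hC₁ b a]
  ring

theorem skewAction_antisymm_right (hC₁ : ∀ a b c d, C a b c d = -C b a c d) (a b c d : ι) :
    skewAction ginv C Y a b d c = -skewAction ginv C Y a b c d := by
  simp only [skewAction, contractLast_antisymm hC₁ d c]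
  ring

theorem skewAction_pair_comm (a b c d : ι) :
    skewAction ginv C Y c d a b = skewAction ginv C Y a b c d := by
  simp only [skewAction]
  ring

theorem skewAction_bianchi (hC₁ : ∀ a b c d, C a b c d = -C b a c d)
    (hCyc : ∀ a b c d, C a b c d + C b c a d + C c a b d = 0) (a b c d : ι) :
    skewAction ginv C Y a b c d + skewAction ginv C Y a c d b
      + skewAction ginv C Y a d b c = 0 := by
  have hM₁ := contractLast_antisymm (ginv := ginv) (Y := Y) hC₁
  have hM := contractLast_cyclic (ginv := ginv) (Y := Y) hCyc
  simp only [skewAction]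
  linear_combination hM a b c d - hM a b d c + hM c d a b - hM b c d a
    - hM₁ c a b d + hM₁ b d a c + hM₁ d a b c - hM₁ a d c b

theorem trace_skewAction (hginv : ∀ a b, ginv a b = ginv b a)
    (hC₁ : ∀ a b c d, C a b c d = -C b a c d) (hC₂ : ∀ a b c d, C a b c d = -C a b d c)
    (hCPair : ∀ a b c d, C a b c d = C c d a b)
    (hCTr : ∀ c d, ∑ a, ∑ b, ginv a b * C a c b d = 0) (hY : ∀ a b, Y a b = -Y b a) (b d : ι) :
    ∑ a, ∑ e, ginv a e * skewAction ginv C Y a b e d = 0 := by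
  simp only [skewAction, mul_add, mul_sub, Finset.sum_add_distrib, Finset.sum_sub_distrib]
  rw [sum_sum_mul_swap_of_symm hginv (fun a e => contractLast ginv C Y a d e b),
    sum_sum_mul_swap_of_symm hginv (fun a e => contractLast ginv C Y a d b e),
    trace_contractLast hCTr, trace_contractLast hCTr, trace_contractLast_eq_sum_raiseBoth,
    trace_contractLast_eq_sum_raiseBoth, sum_mul_raiseBoth_swap hC₁ hC₂ hCPair hY]
  ring

end Contraction

theorem statement9_general {ι : Type*} [Fintype ι]
    (ginv : ι → ι → ℝ)
    (hginvsymm : ∀ a b, ginv a b = ginv b a)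
    (C : ι → ι → ι → ι → ℝ)
    (hCAsym₁ : ∀ a b c d, C a b c d = -C b a c d)
    (hCAsym₂ : ∀ a b c d, C a b c d = -C a b d c)
    (hCPair : ∀ a b c d, C a b c d = C c d a b)
    (hCBianchi : ∀ a b c d, C a b c d + C a c d b + C a d b c = 0)
    (hCTraceless : ∀ c d, ∑ a, ∑ b, ginv a b * C a c b d = 0)
    (Y : ι → ι → ℝ) (hYalt : ∀ a b, Y a b = -Y b a)
    (G : ι → ι → ι → ι → ℝ)
    (hG : ∀ a b c d, G a b c d
      = (1 / 2) * ∑ e, ∑ f, ginv e f *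
          (C a b c e * Y d f - C a b d e * Y c f
            + C c d a e * Y b f - C c d b e * Y a f)) :
    (∀ a b c d, G a b c d = -G b a c d) ∧
    (∀ a b c d, G a b c d = -G a b d c) ∧
    (∀ a b c d, G a b c d = G c d a b) ∧
    (∀ a b c d, G a b c d + G a c d b + G a d b c = 0) ∧
    (∀ b d, ∑ a, ∑ e, ginv a e * G a b e d = 0) := by
  have hGS : ∀ a b c d, G a b c d = (1 / 2) * skewAction ginv C Y a b c d := fun a b c d => by
    simp only [hG, skewAction, contractLast, mul_add, mul_sub, Finset.sum_add_distrib,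
      Finset.sum_sub_distrib, mul_assoc]
  refine ⟨fun a b c d => ?_, fun a b c d => ?_, fun a b c d => ?_, fun a b c d => ?_,
    fun b d => ?_⟩
  · rw [hGS, hGS, skewAction_antisymm_left hCAsym₁]
    ring
  · rw [hGS, hGS, skewAction_antisymm_right hCAsym₁]
    ring
  · rw [hGS, hGS, skewAction_pair_comm]
  · rw [hGS, hGS, hGS, ← mul_add, ← mul_add,
      skewAction_bianchi hCAsym₁ (cyclic_of_bianchi hCAsym₁ hCPair hCBianchi), mul_zero]
  · simp only [hGS, mul_left_comm (ginv _ _), ← Finset.mul_sum,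
      trace_skewAction hginvsymm hCAsym₁ hCAsym₂ hCPair hCTraceless hYalt, mul_zero]

/-- Let `C` have all the algebraic symmetries of a Weyl tensor and
let `Y` be antisymmetric.  Then `G_{abcd} := C_{ab[c}{}^f Y_{d]f} + C_{cd[a}{}^f Y_{b]f}`
has all the algebraic symmetries of a Weyl tensor: antisymmetry in each pair,
pair-exchange symmetry, the first Bianchi identity `G_{a[bcd]} = 0`, and
tracelessness `G^a{}_{bad} = 0`. -/
theorem statement9 {ι : Type*} [Fintype ι] [DecidableEq ι]
    (g ginv : ι → ι → ℝ)
    (hgsymm : ∀ a b, g a b = g b a) (hginvsymm : ∀ a b, ginv a b = ginv b a)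
    (hinv : ∀ a b, ∑ c, ginv a c * g c b = if a = b then (1 : ℝ) else 0)
    (C : ι → ι → ι → ι → ℝ)
    (hCAsym₁ : ∀ a b c d, C a b c d = -C b a c d)
    (hCAsym₂ : ∀ a b c d, C a b c d = -C a b d c)
    (hCPair : ∀ a b c d, C a b c d = C c d a b)
    (hCBianchi : ∀ a b c d, C a b c d + C a c d b + C a d b c = 0)
    (hCTraceless : ∀ c d, ∑ a, ∑ b, ginv a b * C a c b d = 0)
    (Y : ι → ι → ℝ) (hYalt : ∀ a b, Y a b = -Y b a)
    (G : ι → ι → ι → ι → ℝ)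
    (hG : ∀ a b c d, G a b c d
      = (1 / 2) * ∑ e, ∑ f, ginv e f *
          (C a b c e * Y d f - C a b d e * Y c f
            + C c d a e * Y b f - C c d b e * Y a f)) :
    (∀ a b c d, G a b c d = -G b a c d) ∧
    (∀ a b c d, G a b c d = -G a b d c) ∧
    (∀ a b c d, G a b c d = G c d a b) ∧
    (∀ a b c d, G a b c d + G a c d b + G a d b c = 0) ∧
    (∀ b d, ∑ a, ∑ e, ginv a e * G a b e d = 0) :=
  statement9_general ginv hginvsymm C hCAsym₁ hCAsym₂ hCPair hCBianchi hCTraceless Y hYalt G hG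
end
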